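/- For any graph G, the Mycielskian M(G) satisfies χ(M(G)) = χ(G) + 1, provided G has at least one edge. -/

import Mathlib

/-- A finite graph in the sense of the paper: a symmetric adjacency relation,
loops are allowed. -/
structure Graph' (V : Type) where
  Adj : V → V → Prop
  symm : ∀ {u v}, Adj u v → Adj v u

namespace Graph'

variable {α β : Type}

/-- The complete graph `K_m` on vertex set `Fin m`. -/
def completeG (m : ℕ) : Graph' (Fin m) :=
  ⟨fun i j => i ≠ j, fun h => h.symm⟩

/-- `f` is a graph homomorphism from `G` to `H`. -/
def IsHom (G : Graph' α) (H : Graph' β) (f : α → β) : Prop :=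
  ∀ ⦃u v⦄, G.Adj u v → H.Adj (f u) (f v)

/-- `G` admits a proper coloring with `n` colors. -/
def Colorable (G : Graph' α) (n : ℕ) : Prop :=
  ∃ f : α → Fin n, G.IsHom (completeG n) f

/-- The chromatic number of `G`, as an extended natural number. -/
noncomputable def chromNum (G : Graph' α) : ℕ∞ :=
  sInf ((fun k : ℕ => (k : ℕ∞)) '' {k | G.Colorable k})

/-- The neighborhood of a vertex. -/
def neighborSet (G : Graph' α) (v : α) : Set α := {w | G.Adj v w}

/-- The categorical product `G × H`. -/
def tensor (G : Graph' α) (H : Graph' β) : Graph' (α × β) :=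
  ⟨fun p q => G.Adj p.1 q.1 ∧ H.Adj p.2 q.2, fun h => ⟨G.symm h.1, H.symm h.2⟩⟩

/-- The exponential graph `K_m^G`: vertices are all set maps `V(G) → [m]`,
and `f` is adjacent to `g` iff `f u ≠ g v` for every edge `(u,v)` of `G`
(loops are allowed). -/
def expG (G : Graph' α) (m : ℕ) : Graph' (α → Fin m) :=
  ⟨fun f g => ∀ u v, G.Adj u v → f u ≠ g v,
   fun {f g} h u v huv e => h v u (G.symm huv) e.symm⟩

/-- `G` is connected: nonempty and any two vertices are joined by a walk. -/
def Connected (G : Graph' α) : Prop :=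
  Nonempty α ∧ ∀ u v : α, Relation.ReflTransGen G.Adj u v

/-- Property `P` of the paper: `G` is simple, and for any two disjoint edges
`(v1,w1)` and `(v2,w2)`, if `(v2,v1)` is an edge then `(w2,v1)` or `(w2,w1)`
is an edge. -/
def PropertyP (G : Graph' α) : Prop :=
  (∀ v, ¬ G.Adj v v) ∧
  ∀ ⦃v1 w1 v2 w2 : α⦄, G.Adj v1 w1 → G.Adj v2 w2 →
    v1 ≠ v2 → v1 ≠ w2 → w1 ≠ v2 → w1 ≠ w2 →
    G.Adj v2 v1 → (G.Adj w2 v1 ∨ G.Adj w2 w1)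

/-- Base (unsymmetrized) relation for the Mycielskian:
level-0 copies are adjacent as in `G`, a level-1 vertex is adjacent to the
level-0 copies of the neighbours of its shadow, and the apex `none` is
adjacent to all level-1 vertices. -/
def mycRel (G : Graph' α) : Option (α × Bool) → Option (α × Bool) → Prop
  | some (a, false), some (b, false) => G.Adj a b
  | some (a, true), some (b, false) => G.Adj a b
  | none, some (_, true) => True
  | _, _ => False

/-- The Mycielskian `M(G)`. -/
def myc (G : Graph' α) : Graph' (Option (α × Bool)) :=
  ⟨fun u v => G.mycRel u v ∨ G.mycRel v u, fun h => h.symm⟩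

/-- The double Mycielskian `M(M(K_n))`. -/
def MMK (n : ℕ) : Graph' (Option (Option (Fin n × Bool) × Bool)) :=
  myc (myc (completeG n))

/-- The vertex `(x, i, j)` of `M(M(K_n))`. -/
def vtx {n : ℕ} (x : Fin n) (i j : Bool) : Option (Option (Fin n × Bool) × Bool) :=
  some (some (x, i), j)

/-- The vertex `w_i = (*, i)` of `M(M(K_n))` for `i ∈ {0,1}`. -/
def wv (n : ℕ) (i : Bool) : Option (Option (Fin n × Bool) × Bool) :=
  some (none, i)

/-- The apex vertex `w_2` of `M(M(K_n))`. -/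
def w2 (n : ℕ) : Option (Option (Fin n × Bool) × Bool) := none

end Graph'


/-! A proper `n`-colouring of `G` extends to `M(G)` by giving `(x, i)` the colour of `x` and the
apex a new colour. Conversely, from an `(n + 1)`-colouring `c` of `M(G)`, recolour every `x` whose
level-0 copy has the apex's colour with the colour of its level-1 copy. This is proper on `G`,
since `(x, 1)` is adjacent to the level-0 copies of the neighbours of `x`, and it misses the
apex's colour, since `(x, 1)` is adjacent to the apex; so it uses only `n` colours. Hence `M(G)`
is `(n + 1)`-colourable iff `G` is `n`-colourable, and `M(G)` is never `0`-colourable. -/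

namespace Graph'

variable {α β : Type}

lemma not_colorable_zero [Nonempty α] (G : Graph' α) : ¬ G.Colorable 0 :=
  fun ⟨f, _⟩ => (f (Classical.arbitrary α)).elim0

lemma colorable_of_isHom_of_forall_ne {G : Graph' α} {n : ℕ} {f : α → Fin (n + 1)}
    (hf : G.IsHom (completeG (n + 1)) f) (p : Fin (n + 1)) (hp : ∀ x, f x ≠ p) :
    G.Colorable n := by
  choose g hg using fun x => Fin.exists_succAbove_eq (hp x)
  exact ⟨g, fun u v huv e => hf huv (by rw [← hg u, ← hg v, e])⟩

lemma chromNum_eq_add_one_of_colorable_succ_iff {G : Graph' α} {H : Graph' β}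
    (h0 : ¬ H.Colorable 0) (hsucc : ∀ n, H.Colorable (n + 1) ↔ G.Colorable n) :
    H.chromNum = G.chromNum + 1 := by
  have hset : (fun k : ℕ => (k : ℕ∞)) '' {k | H.Colorable k}
      = (· + 1) '' ((fun k : ℕ => (k : ℕ∞)) '' {k | G.Colorable k}) := by
    ext x
    simp only [Set.mem_image, Set.mem_ofPred_eq, exists_exists_and_eq_and]
    constructor
    · rintro ⟨_ | n, hn, rfl⟩
      · exact absurd hn h0
      · exact ⟨n, (hsucc n).mp hn, by push_cast; rfl⟩
    · rintro ⟨n, hn, rfl⟩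
      exact ⟨n + 1, (hsucc n).mpr hn, by push_cast; rfl⟩
  rw [chromNum, chromNum, hset, ENat.sInf_add, sInf_image]

lemma Colorable.myc_succ {G : Graph' α} {n : ℕ} (h : G.Colorable n) :
    (myc G).Colorable (n + 1) := by
  obtain ⟨f, hf⟩ := h
  refine ⟨fun v => v.elim (Fin.last n) fun a => (f a.1).castSucc, ?_⟩
  rintro (_ | ⟨a, (_ | _)⟩) (_ | ⟨b, (_ | _)⟩) hab <;>
    simp only [Graph'.myc, mycRel, or_false, false_or, or_self] at hab <;>
    simp only [completeG, Option.elim, ne_eq, Fin.castSucc_inj]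
  all_goals first
    | exact hab.elim
    | exact (Fin.castSucc_lt_last _).ne'
    | exact (Fin.castSucc_lt_last _).ne
    | exact hf hab
    | exact fun e => hf hab e.symm
    | exact hab.elim (fun h => hf h) fun h => hf (G.symm h)

def mycPullback {m : ℕ} (c : Option (α × Bool) → Fin m) (x : α) : Fin m :=
  if c (some (x, false)) = c none then c (some (x, true)) else c (some (x, false))

lemma isHom_mycPullback {G : Graph' α} {m : ℕ} {c : Option (α × Bool) → Fin m}
    (hc : (myc G).IsHom (completeG m) c) : G.IsHom (completeG m) (mycPullback c) := by
  intro u v huv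
  have e00 : (myc G).Adj (some (u, false)) (some (v, false)) := Or.inl huv
  have e10 : (myc G).Adj (some (u, true)) (some (v, false)) := Or.inl huv
  have e01 : (myc G).Adj (some (u, false)) (some (v, true)) := Or.inr (G.symm huv)
  unfold mycPullback
  split_ifs with hu hv hv
  · exact fun _ => hc e00 (hu.trans hv.symm)
  · exact hc e10
  · exact hc e01
  · exact hc e00

lemma mycPullback_ne_apex {G : Graph' α} {m : ℕ} {c : Option (α × Bool) → Fin m}
    (hc : (myc G).IsHom (completeG m) c) (x : α) : mycPullback c x ≠ c none := by
  unfold mycPullback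
  split_ifs with hx
  · exact fun e => hc (u := none) (v := some (x, true)) (Or.inl trivial) e.symm
  · exact hx

lemma Colorable.of_myc_succ {G : Graph' α} {n : ℕ} (h : (myc G).Colorable (n + 1)) :
    G.Colorable n :=
  let ⟨_, hc⟩ := h
  colorable_of_isHom_of_forall_ne (isHom_mycPullback hc) _ (mycPullback_ne_apex hc)

lemma myc_colorable_succ_iff (G : Graph' α) (n : ℕ) :
    (myc G).Colorable (n + 1) ↔ G.Colorable n :=
  ⟨Colorable.of_myc_succ, Colorable.myc_succ⟩

end Graph'

namespace Graph

open Graph'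

theorem chromNum_myc_general {α : Type} (G : Graph' α) :
    (myc G).chromNum = G.chromNum + 1 :=
  chromNum_eq_add_one_of_colorable_succ_iff (myc G).not_colorable_zero
    (myc_colorable_succ_iff G)

/-- For any finite graph `G` with at least one edge,
`χ(M(G)) = χ(G) + 1`. -/
theorem chromNum_myc {α : Type} [Fintype α] (G : Graph' α)
    (hedge : ∃ u v, G.Adj u v) :
    (myc G).chromNum = G.chromNum + 1 :=
  chromNum_myc_general G

end Graph
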